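/- Let N ≥ 2 be an integer whose Bergman expansion has support {p_0 < p_1 < … < p_n} with n ≥ 1, and set s_k = p_k − p_{k−1} − 1 for 1 ≤ k ≤ n. Let r : ℕ → ℤ be any function satisfying: r(0) = 1; r(1) = s_1/2 + 1 if s_1 is even and r(1) = (s_1+1)/2 if s_1 is odd; and for every k with 2 ≤ k ≤ n, r(k) = (s_k/2 + 1)·r(k−1) if s_k is even and r(k) = ((s_k+1)/2 + 1)·r(k−1) − r(k−2) if s_k is odd. Then the set Nu(N) of natural base-phi expansions of N is finite and has exactly r(n) elements. -/
import Mathlib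


noncomputable section

open Finset

/-- The golden ratio φ = (1+√5)/2. -/
def goldenPhi : ℝ := (1 + Real.sqrt 5) / 2

/-- `a` is a base-phi representation of `N`: a finitely supported 0-1 digit
function on `ℤ` whose associated sum of powers of φ equals `N`. -/
def IsBasePhiRep (N : ℕ) (a : ℤ →₀ ℕ) : Prop :=
  (∀ i, a i ≤ 1) ∧ (N : ℝ) = ∑ i ∈ a.support, (a i : ℝ) * goldenPhi ^ i

/-- `d` is the Bergman expansion of `N`: a base-phi representation with no
two consecutive digits equal to 1. -/
def IsBergman (N : ℕ) (d : ℤ →₀ ℕ) : Prop :=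
  IsBasePhiRep N d ∧ ∀ i : ℤ, d i * d (i + 1) = 0

/-- The Knott condition: the expansion does not end in the digits 011, i.e.
letting `m` be the minimum of the support, not (a(m+1) = 1 and a(m+2) = 0). -/
def KnottCond (a : ℤ →₀ ℕ) : Prop :=
  ∀ m : ℤ, a.support.min = (m : WithTop ℤ) → ¬(a (m + 1) = 1 ∧ a (m + 2) = 0)

/-- The set of base-phi representations of `N` satisfying the Knott condition. -/
def KnottSet (N : ℕ) : Set (ℤ →₀ ℕ) :=
  {a | IsBasePhiRep N a ∧ KnottCond a}

/-- `Flip a a'` : `a'` is obtained from `a` by a golden mean flip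
`100 → 011` at some index `i`. -/
def Flip (a a' : ℤ →₀ ℕ) : Prop :=
  ∃ i : ℤ, a (i + 1) = 1 ∧ a i = 0 ∧ a (i - 1) = 0 ∧
    a' (i + 1) = 0 ∧ a' i = 1 ∧ a' (i - 1) = 1 ∧
    ∀ j : ℤ, j ≠ i + 1 → j ≠ i → j ≠ i - 1 → a' j = a j

/-- The Lucas numbers: L₀ = 2, L₁ = 1, L_{n+2} = L_{n+1} + L_n. -/
def lucasNum : ℕ → ℕ
  | 0 => 2
  | 1 => 1
  | n + 2 => lucasNum (n + 1) + lucasNum n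

/-- The number of representations of `M` as a sum of distinct Fibonacci
numbers `F_i` with `i ≥ 2`. -/
def TotFIB (M : ℕ) : ℕ :=
  {S : Finset ℕ | (∀ i ∈ S, 2 ≤ i) ∧ ∑ i ∈ S, Nat.fib i = M}.ncard



section BasePhiAux

lemma phi_pos : 0 < goldenPhi := by
  have : (0:ℝ) ≤ Real.sqrt 5 := Real.sqrt_nonneg 5
  unfold goldenPhi; linarith

lemma one_lt_phi : 1 < goldenPhi := by
  have : (1:ℝ) < Real.sqrt 5 := by
    have := Real.lt_sqrt (x := 1) (y := 5) (by norm_num)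
    rw [this]; norm_num
  unfold goldenPhi; linarith

lemma phi_lt_two : goldenPhi < 2 := by
  have : Real.sqrt 5 < 3 := by
    have h : Real.sqrt 5 < Real.sqrt 9 := by
      apply Real.sqrt_lt_sqrt <;> norm_num
    have : Real.sqrt 9 = 3 := by
      rw [show (9:ℝ) = 3^2 by norm_num, Real.sqrt_sq] ; norm_num
    linarith
  unfold goldenPhi; linarith

lemma phi_sq : goldenPhi ^ 2 = goldenPhi + 1 := by
  have h5 : Real.sqrt 5 ^ 2 = 5 := Real.sq_sqrt (by norm_num)
  unfold goldenPhi; ring_nf; nlinarith [h5]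

lemma phi_ne : goldenPhi ≠ 0 := ne_of_gt phi_pos

lemma phi_zpow_pos (t : ℤ) : 0 < goldenPhi ^ t := zpow_pos phi_pos t

lemma phi_zpow_fib (t : ℤ) : goldenPhi ^ (t+2) = goldenPhi ^ (t+1) + goldenPhi ^ t := by
  have h1 : goldenPhi ^ (t+2) = goldenPhi ^ t * goldenPhi ^ (2:ℤ) := by
    rw [← zpow_add₀ phi_ne]
  have h2 : goldenPhi ^ (t+1) = goldenPhi ^ t * goldenPhi := by
    rw [zpow_add₀ phi_ne, zpow_one]
  have h3 : goldenPhi ^ (2:ℤ) = goldenPhi + 1 := by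
    rw [show (2:ℤ) = (2:ℕ) by norm_num, zpow_natCast, phi_sq]
  rw [h1, h2, h3]; ring

lemma phi_zpow_le {a b : ℤ} (h : a ≤ b) : goldenPhi ^ a ≤ goldenPhi ^ b :=
  zpow_le_zpow_right₀ (le_of_lt one_lt_phi) h

lemma phi_zpow_lt {a b : ℤ} (h : a < b) : goldenPhi ^ a < goldenPhi ^ b :=
  zpow_lt_zpow_right₀ one_lt_phi h

def phiVal (S : Finset ℤ) : ℝ := ∑ i ∈ S, goldenPhi ^ i

def RepSet (β : ℝ) (L t : ℤ) : Set (Finset ℤ) :=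
  {S | (∀ i ∈ S, L ≤ i ∧ i ≤ t) ∧ phiVal S = β}

lemma repSet_finite (β : ℝ) (L t : ℤ) : (RepSet β L t).Finite := by
  apply Set.Finite.subset ((Finset.Icc L t).powerset.finite_toSet)
  intro S hS
  simp only [coe_powerset, Set.mem_preimage, Set.mem_powerset_iff, coe_subset, mem_coe,
    Finset.mem_powerset]
  intro i hi
  exact Finset.mem_Icc.mpr (hS.1 i hi)

lemma sum_Icc_phi_aux (L : ℤ) (m : ℕ) :
    ∑ i ∈ Finset.Icc L (L - 1 + m), goldenPhi ^ i
      = goldenPhi ^ (L - 1 + m + 2) - goldenPhi ^ (L+1) := by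
  induction m with
  | zero =>
      simp only [Nat.cast_zero, add_zero]
      rw [Finset.Icc_eq_empty_iff.mpr (by omega : ¬ L ≤ L - 1),
        show L - 1 + 2 = L + 1 by ring]
      simp
  | succ m ih =>
      have hins : Finset.Icc L (L - 1 + (m+1 : ℕ)) =
          insert (L - 1 + (m+1:ℕ)) (Finset.Icc L (L - 1 + m)) := by
        ext x; simp only [Finset.mem_Icc, Finset.mem_insert]; push_cast; omega
      rw [hins, Finset.sum_insert (by simp only [Finset.mem_Icc]; push_cast; omega), ih]
      have h1 : L - 1 + ((m:ℤ)+1) + 2 = (L - 1 + m) + 1 + 2 := by ring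
      have h2 : (L - 1 + ((m:ℤ)+1)) = (L - 1 + m) + 1 := by ring
      push_cast
      rw [h1, h2, phi_zpow_fib ((L - 1 + m) + 1), show (L-1+(m:ℤ))+1+1 = (L-1+(m:ℤ))+2 by ring,
        phi_zpow_fib (L - 1 + m)]
      ring

lemma sum_Icc_phi (L t : ℤ) (ht : L - 1 ≤ t) :
    ∑ i ∈ Finset.Icc L t, goldenPhi ^ i = goldenPhi ^ (t+2) - goldenPhi ^ (L+1) := by
  have h := sum_Icc_phi_aux L (t + 1 - L).toNat
  have he : L - 1 + ((t + 1 - L).toNat : ℤ) = t := by omega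
  rw [he] at h; exact h

lemma phiVal_nonneg (S : Finset ℤ) : 0 ≤ phiVal S :=
  Finset.sum_nonneg fun i _ => (phi_zpow_pos i).le

lemma phiVal_lt (S : Finset ℤ) (t : ℤ) (h : ∀ i ∈ S, i ≤ t) :
    phiVal S < goldenPhi ^ (t+2) := by
  rcases S.eq_empty_or_nonempty with rfl | hne
  · simpa [phiVal] using phi_zpow_pos (t+2)
  · set L := S.min' hne with hL
    have hsub : S ⊆ Finset.Icc L t := fun i hi =>
      Finset.mem_Icc.mpr ⟨S.min'_le i hi, h i hi⟩
    have hb : phiVal S ≤ ∑ i ∈ Finset.Icc L t, goldenPhi ^ i :=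
      Finset.sum_le_sum_of_subset_of_nonneg hsub (fun i _ _ => (phi_zpow_pos i).le)
    have hLt : L - 1 ≤ t := by
      have := h L (S.min'_mem hne); omega
    rw [sum_Icc_phi L t hLt] at hb
    have := phi_zpow_pos (L+1)
    linarith

lemma phiVal_ge {S : Finset ℤ} {m : ℤ} (h : m ∈ S) : goldenPhi ^ m ≤ phiVal S :=
  Finset.single_le_sum (fun i _ => (phi_zpow_pos i).le) h

lemma repSet_empty {β : ℝ} {L t : ℤ} (hβ : β ≠ 0) (h : t < L) : RepSet β L t = ∅ := by
  ext S
  simp only [RepSet, Set.mem_setOf_eq, Set.mem_empty_iff_false, iff_false, not_and]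
  intro hb
  have : S = ∅ := Finset.eq_empty_of_forall_notMem fun i hi => by
    have := hb i hi; omega
  rw [this]; simp [phiVal]; exact fun h' => hβ h'.symm

lemma repSet_single (L : ℤ) : RepSet (goldenPhi ^ L) L L = {{L}} := by
  ext S
  simp only [RepSet, Set.mem_setOf_eq, Set.mem_singleton_iff]
  constructor
  · rintro ⟨hb, hv⟩
    have hsub : S ⊆ {L} := fun i hi => by
      have := hb i hi; simp; omega
    rcases Finset.subset_singleton_iff.mp hsub with rfl | rfl
    · exfalso; have := phi_zpow_pos L; simp [phiVal] at hv; linarith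
    · rfl
  · rintro rfl
    exact ⟨by simp, by simp [phiVal]⟩

lemma phiVal_erase {S : Finset ℤ} {t : ℤ} (h : t ∈ S) :
    phiVal (S.erase t) = phiVal S - goldenPhi ^ t := by
  have := Finset.add_sum_erase S (fun i => goldenPhi ^ i) h
  unfold phiVal; linarith [this]

/-- Bijection between reps containing the top digit and reps of the remainder. -/
lemma erase_bij (β : ℝ) (L t : ℤ) (hL : L ≤ t) :
    Set.BijOn (fun S : Finset ℤ => S.erase t)
      {S | S ∈ RepSet β L t ∧ t ∈ S} (RepSet (β - goldenPhi ^ t) L (t-1)) := by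
  constructor
  · rintro S ⟨⟨hb, hv⟩, ht⟩
    refine ⟨fun i hi => ?_, ?_⟩
    · rcases Finset.mem_erase.mp hi with ⟨hne, hiS⟩
      have := hb i hiS; omega
    · rw [phiVal_erase ht, hv]
  constructor
  · rintro S₁ ⟨⟨_, _⟩, h₁⟩ S₂ ⟨⟨_, _⟩, h₂⟩ he
    simp only at he
    rw [← Finset.insert_erase h₁, ← Finset.insert_erase h₂, he]
  · rintro T ⟨hb, hv⟩
    refine ⟨insert t T, ⟨⟨fun i hi => ?_, ?_⟩, Finset.mem_insert_self t T⟩, ?_⟩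
    · rcases Finset.mem_insert.mp hi with rfl | hiT
      · omega
      · have := hb i hiT; omega
    · have htT : t ∉ T := fun h => by have := hb t h; omega
      unfold phiVal
      rw [Finset.sum_insert htT]
      have : phiVal T = β - goldenPhi ^ t := hv
      unfold phiVal at this; rw [this]; ring
    · have htT : t ∉ T := fun h => by have := hb t h; omega
      simp [Finset.erase_insert htT]

lemma cnt_force {β : ℝ} {L t : ℤ} (hL : L ≤ t) (hβ : goldenPhi ^ (t+1) ≤ β) :
    (RepSet β L t).ncard = (RepSet (β - goldenPhi ^ t) L (t-1)).ncard := by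
  have hall : {S | S ∈ RepSet β L t ∧ t ∈ S} = RepSet β L t := by
    ext S
    simp only [Set.mem_setOf_eq, and_iff_left_iff_imp]
    rintro ⟨hb, hv⟩
    by_contra ht
    have hlt : phiVal S < goldenPhi ^ (t+1) := by
      have := phiVal_lt S (t-1) (fun i hi => by have := hb i hi; have : i ≠ t := fun h => ht (h ▸ hi); omega)
      rwa [show t - 1 + 2 = t + 1 by ring] at this
    rw [hv] at hlt; linarith
  have hbij := erase_bij β L t hL
  rw [hall] at hbij
  rw [← hbij.image_eq, Set.ncard_image_of_injOn hbij.injOn]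

lemma cnt_step {β : ℝ} {L t : ℤ} (hL : L ≤ t - 1)
    (h1 : goldenPhi ^ t ≤ β) (h2 : β < goldenPhi ^ (t+1)) :
    (RepSet β L t).ncard
      = (RepSet (β - goldenPhi ^ t) L (t-1)).ncard
        + (RepSet (β - goldenPhi ^ (t-1)) L (t-2)).ncard := by
  have hB : {S | S ∈ RepSet β L t ∧ t ∉ S} = RepSet β L (t-1) := by
    ext S
    simp only [Set.mem_setOf_eq, RepSet]
    constructor
    · rintro ⟨⟨hb, hv⟩, ht⟩
      exact ⟨fun i hi => by have := hb i hi; have : i ≠ t := fun h => ht (h ▸ hi); omega, hv⟩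
    · rintro ⟨hb, hv⟩
      exact ⟨⟨fun i hi => by have := hb i hi; omega, hv⟩,
        fun h => by have := hb t h; omega⟩
  have hsplit : RepSet β L t
      = {S | S ∈ RepSet β L t ∧ t ∈ S} ∪ {S | S ∈ RepSet β L t ∧ t ∉ S} := by
    ext S; by_cases h : t ∈ S <;> simp [h]
  have hdisj : Disjoint {S | S ∈ RepSet β L t ∧ t ∈ S} {S | S ∈ RepSet β L t ∧ t ∉ S} := by
    rw [Set.disjoint_iff]
    rintro S ⟨⟨_, h1⟩, ⟨_, h2⟩⟩; exact (h2 h1).elim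
  have hfin1 : {S | S ∈ RepSet β L t ∧ t ∈ S}.Finite :=
    (repSet_finite β L t).subset (fun S hS => hS.1)
  have hfin2 : {S | S ∈ RepSet β L t ∧ t ∉ S}.Finite :=
    (repSet_finite β L t).subset (fun S hS => hS.1)
  have hbij := erase_bij β L t (by omega)
  have hA : {S | S ∈ RepSet β L t ∧ t ∈ S}.ncard = (RepSet (β - goldenPhi ^ t) L (t-1)).ncard := by
    rw [← hbij.image_eq, Set.ncard_image_of_injOn hbij.injOn]
  have hBc : (RepSet β L (t-1)).ncard = (RepSet (β - goldenPhi ^ (t-1)) L (t-2)).ncard := by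
    have := cnt_force (β := β) (L := L) (t := t-1) hL
      (by rw [show t - 1 + 1 = t by ring]; exact h1)
    rwa [show t - 1 - 1 = t - 2 by ring] at this
  rw [hsplit, Set.ncard_union_eq hdisj hfin1 hfin2, hA, hB, hBc]

lemma cnt_shrink {β : ℝ} {L t u : ℤ} (hu : u ≤ t) (hβ : β < goldenPhi ^ (u+1)) :
    RepSet β L t = RepSet β L u := by
  ext S
  simp only [RepSet, Set.mem_setOf_eq]
  constructor
  · rintro ⟨hb, hv⟩
    refine ⟨fun i hi => ⟨(hb i hi).1, ?_⟩, hv⟩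
    by_contra h
    have hle : goldenPhi ^ (u+1) ≤ goldenPhi ^ i := phi_zpow_le (by omega)
    have := phiVal_ge hi
    rw [hv] at this; linarith
  · rintro ⟨hb, hv⟩
    exact ⟨fun i hi => ⟨(hb i hi).1, le_trans (hb i hi).2 hu⟩, hv⟩

lemma lb_only {β : ℝ} {L u : ℤ} (hβ : β < goldenPhi ^ (u+1)) :
    {S : Finset ℤ | (∀ i ∈ S, L ≤ i) ∧ phiVal S = β} = RepSet β L u := by
  ext S
  simp only [RepSet, Set.mem_setOf_eq]
  constructor
  · rintro ⟨hb, hv⟩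
    refine ⟨fun i hi => ⟨hb i hi, ?_⟩, hv⟩
    by_contra h
    have : goldenPhi ^ (u+1) ≤ goldenPhi ^ i := phi_zpow_le (by omega)
    have h2 := phiVal_ge hi
    rw [hv] at h2; linarith
  · rintro ⟨hb, hv⟩
    exact ⟨fun i hi => (hb i hi).1, hv⟩


end BasePhiAux

/-- Recursive formula for the number of natural base-phi expansions of `N`.
Here `p 0` is the minimum of the support of the Bergman expansion, i.e. `R(N)`,
so the set in the conclusion is `Nu(N)`. -/
theorem card_naturalSet_eq_recursion (N : ℕ) (hN : 2 ≤ N)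
    (d : ℤ →₀ ℕ) (hd : IsBergman N d)
    (n : ℕ) (hn : 1 ≤ n) (p : ℕ → ℤ)
    (hmono : ∀ i j : ℕ, i < j → j ≤ n → p i < p j)
    (hsupp : d.support = (Finset.range (n + 1)).image p)
    (s : ℕ → ℤ) (hs : ∀ k : ℕ, 1 ≤ k → k ≤ n → s k = p k - p (k - 1) - 1)
    (r : ℕ → ℤ) (hr0 : r 0 = 1)
    (hr1even : Even (s 1) → r 1 = s 1 / 2 + 1)
    (hr1odd : Odd (s 1) → r 1 = (s 1 + 1) / 2)
    (hreven : ∀ k : ℕ, 2 ≤ k → k ≤ n → Even (s k) →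
      r k = (s k / 2 + 1) * r (k - 1))
    (hrodd : ∀ k : ℕ, 2 ≤ k → k ≤ n → Odd (s k) →
      r k = ((s k + 1) / 2 + 1) * r (k - 1) - r (k - 2))
    (Nu : Set (ℤ →₀ ℕ))
    (hNu : Nu = {a | IsBasePhiRep N a ∧ ∀ i : ℤ, i < p 0 → a i = 0}) :
    Nu.Finite ∧ (Nu.ncard : ℤ) = r n := by
  classical
  obtain ⟨⟨hdle, hdsum⟩, hdadj⟩ := hd
  -- support membership and digit values
  have hpmem : ∀ k : ℕ, k ≤ n → p k ∈ d.support := by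
    intro k hk
    rw [hsupp]
    exact Finset.mem_image.mpr ⟨k, Finset.mem_range.mpr (by omega), rfl⟩
  have hd1 : ∀ i ∈ d.support, d i = 1 := by
    intro i hi
    have h1 := hdle i
    have h2 := Finsupp.mem_support_iff.mp hi
    omega
  -- gaps are at least 2
  have hgap : ∀ k : ℕ, k + 1 ≤ n → p k + 2 ≤ p (k + 1) := by
    intro k hk
    have hlt : p k < p (k+1) := hmono k (k+1) (by omega) hk
    by_contra hcon
    have heq : p (k+1) = p k + 1 := by omega
    have h1 : d (p k) = 1 := hd1 _ (hpmem k (by omega))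
    have h2 : d (p k + 1) = 1 := by
      rw [← heq]; exact hd1 _ (hpmem (k+1) hk)
    have := hdadj (p k)
    rw [h1, h2] at this
    omega
  set L := p 0 with hL
  have hple : ∀ i j : ℕ, i ≤ j → j ≤ n → p i ≤ p j := by
    intro i j hij hj
    rcases Nat.eq_or_lt_of_le hij with rfl | h
    · exact le_refl _
    · exact (hmono i j h hj).le
  have hp0le : ∀ k : ℕ, k ≤ n → L ≤ p k := fun k hk => hple 0 k (by omega) hk
  -- the Bergman partial sums
  set B : ℕ → ℝ := fun k => ∑ j ∈ Finset.range (k+1), goldenPhi ^ (p j) with hB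
  have hB0 : B 0 = goldenPhi ^ (p 0) := by simp [hB]
  have hBsucc : ∀ k : ℕ, B (k+1) = B k + goldenPhi ^ (p (k+1)) := by
    intro k; simp [hB, Finset.sum_range_succ]
  have hBlow : ∀ k : ℕ, goldenPhi ^ (p k) ≤ B k := by
    intro k
    exact Finset.single_le_sum (f := fun j => goldenPhi ^ (p j))
      (fun j _ => (phi_zpow_pos (p j)).le) (Finset.mem_range.mpr (by omega))
  have hBpos : ∀ k : ℕ, 0 < B k := fun k => lt_of_lt_of_le (phi_zpow_pos _) (hBlow k)
  have hfib' : ∀ t : ℤ, goldenPhi ^ (t+1) = goldenPhi ^ t + goldenPhi ^ (t-1) := by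
    intro t
    have := phi_zpow_fib (t-1)
    rw [show t - 1 + 2 = t + 1 by ring, show t - 1 + 1 = t by ring] at this
    exact this
  have hBhigh : ∀ k : ℕ, k ≤ n → B k < goldenPhi ^ (p k + 1) := by
    intro k
    induction k with
    | zero =>
        intro _
        rw [hB0]
        exact phi_zpow_lt (by omega)
    | succ k ih =>
        intro hk
        have h1 : B k < goldenPhi ^ (p k + 1) := ih (by omega)
        have hg := hgap k hk
        have h2 : goldenPhi ^ (p k + 1) ≤ goldenPhi ^ (p (k+1) - 1) := phi_zpow_le (by omega)
        have h3 := hfib' (p (k+1))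
        have h4 := hBsucc k
        linarith
  -- the main counting quantities
  set C : ℕ → ℕ := fun k => (RepSet (B k) L (p k)).ncard with hC
  set Hc : ℕ → ℤ → ℕ := fun k t => (RepSet (goldenPhi ^ t + B k) L t).ncard with hHc
  have hC0 : C 0 = 1 := by
    simp only [hC, hB0, hL]
    rw [repSet_single (p 0)]
    exact Set.ncard_singleton _
  have hCH : ∀ m : ℕ, C (m+1) = Hc m (p (m+1)) := by
    intro m
    simp only [hC, hHc]
    rw [show B (m+1) = goldenPhi ^ (p (m+1)) + B m by rw [hBsucc]; ring]
  -- the cascade recursion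
  have hrec : ∀ k : ℕ, k ≤ n → ∀ t : ℤ, p k + 2 ≤ t →
      Hc k t = C k + Hc k (t-2) := by
    intro k hk t ht
    have hPk := hp0le k hk
    have h1 : goldenPhi ^ t ≤ goldenPhi ^ t + B k := le_add_of_nonneg_right (hBpos k).le
    have h2 : goldenPhi ^ t + B k < goldenPhi ^ (t+1) := by
      have ha : B k < goldenPhi ^ (p k + 1) := hBhigh k hk
      have hb : goldenPhi ^ (p k + 1) ≤ goldenPhi ^ (t-1) := phi_zpow_le (by omega)
      have hc := hfib' t
      linarith
    have hstep := cnt_step (β := goldenPhi ^ t + B k) (L := L) (t := t)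
      (by omega) h1 h2
    have e1 : goldenPhi ^ t + B k - goldenPhi ^ t = B k := by ring
    have e2 : goldenPhi ^ t + B k - goldenPhi ^ (t-1) = goldenPhi ^ (t-2) + B k := by
      have := hfib' (t-1)
      rw [show t - 1 + 1 = t by ring, show t - 1 - 1 = t - 2 by ring] at this
      rw [this]; ring
    rw [e1, e2] at hstep
    rw [cnt_shrink (by omega : p k ≤ t - 1) (hBhigh k hk)] at hstep
    simp only [hHc, hC]
    exact hstep
  -- cascade boundary at p k + 1
  have hbnd1 : ∀ k : ℕ, k ≤ n → Hc k (p k + 1) = C k := by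
    intro k hk
    have hPk := hp0le k hk
    have hβ : goldenPhi ^ (p k + 1 + 1) ≤ goldenPhi ^ (p k + 1) + B k := by
      have h4 := hfib' (p k + 1)
      rw [show p k + 1 - 1 = p k by ring] at h4
      have h3 := hBlow k
      linarith
    have hforce := cnt_force (β := goldenPhi ^ (p k + 1) + B k) (L := L) (t := p k + 1)
      (by omega) hβ
    have e1 : goldenPhi ^ (p k + 1) + B k - goldenPhi ^ (p k + 1) = B k := by ring
    rw [e1, show p k + 1 - 1 = p k by ring] at hforce
    simp only [hHc, hC]
    exact hforce
  -- cascade boundary below the lowest block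
  have hbnd0 : Hc 0 (p 0) = 0 := by
    have hβ : goldenPhi ^ (p 0 + 1) ≤ goldenPhi ^ (p 0) + B 0 := by
      have h4 : goldenPhi ^ (p 0 + 1) = goldenPhi ^ (p 0) + goldenPhi ^ (p 0 - 1) := hfib' _
      have h5 : goldenPhi ^ (p 0 - 1) ≤ goldenPhi ^ (p 0) := phi_zpow_le (by omega)
      rw [hB0]
      linarith
    have hforce := cnt_force (β := goldenPhi ^ (p 0) + B 0) (L := L) (t := p 0)
      (le_refl _) hβ
    have e1 : goldenPhi ^ (p 0) + B 0 - goldenPhi ^ (p 0) = B 0 := by ring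
    rw [e1] at hforce
    rw [repSet_empty (hBpos 0).ne' (by omega)] at hforce
    simp only [hHc]
    rw [hforce]
    exact Set.ncard_empty _
  -- block-splitting identity: C (m+1) = C m + Hc (m+1) (p (m+1))
  have hbk : ∀ m : ℕ, m + 1 ≤ n → C (m+1) = C m + Hc (m+1) (p (m+1)) := by
    intro m hm
    have hg := hgap m hm
    have hPm := hp0le m (by omega)
    set q := p (m+1) with hq
    have h1 : goldenPhi ^ q ≤ B (m+1) := hBlow (m+1)
    have h2 : B (m+1) < goldenPhi ^ (q+1) := hBhigh (m+1) hm
    have hstep := cnt_step (β := B (m+1)) (L := L) (t := q) (by omega) h1 h2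
    have e1 : B (m+1) - goldenPhi ^ q = B m := by rw [hBsucc]; ring
    rw [e1, cnt_shrink (by omega : p m ≤ q - 1) (hBhigh m (by omega))] at hstep
    -- now identify Hc (m+1) (p (m+1)) with the second summand
    have hβf : goldenPhi ^ (q+1) ≤ goldenPhi ^ q + B (m+1) := by
      have h3 := hfib' q
      have h4 : goldenPhi ^ (q - 1) ≤ goldenPhi ^ q := phi_zpow_le (by omega)
      linarith
    have hf1 := cnt_force (β := goldenPhi ^ q + B (m+1)) (L := L) (t := q) (by omega) hβf
    have e2 : goldenPhi ^ q + B (m+1) - goldenPhi ^ q = B (m+1) := by ring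
    rw [e2] at hf1
    have hf2 := cnt_force (β := B (m+1)) (L := L) (t := q - 1) (by omega)
      (by rw [show q - 1 + 1 = q by ring]; exact h1)
    rw [show q - 1 - 1 = q - 2 by ring] at hf2
    simp only [hHc, hC]
    rw [hstep, hf1, hf2]
  -- closed forms for the cascade
  have hcasc1 : ∀ k : ℕ, k ≤ n → ∀ j : ℕ,
      Hc k (p k + 1 + 2*(j:ℤ)) = (j+1) * C k := by
    intro k hk j
    induction j with
    | zero => simpa using hbnd1 k hk
    | succ j ih =>
        have ht : p k + 2 ≤ p k + 1 + 2*((j:ℤ)+1) := by omega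
        have := hrec k hk (p k + 1 + 2*((j:ℤ)+1)) ht
        rw [show p k + 1 + 2*((j:ℤ)+1) - 2 = p k + 1 + 2*(j:ℤ) by ring] at this
        push_cast at this ⊢
        rw [this, ih]
        ring
  have hcasc2 : ∀ k : ℕ, k ≤ n → ∀ j : ℕ,
      Hc k (p k + 2 + 2*(j:ℤ)) = (j+1) * C k + Hc k (p k) := by
    intro k hk j
    induction j with
    | zero =>
        have := hrec k hk (p k + 2) (by omega)
        rw [show p k + 2 - 2 = p k by ring] at this
        simpa using this
    | succ j ih =>
        have ht : p k + 2 ≤ p k + 2 + 2*((j:ℤ)+1) := by omega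
        have := hrec k hk (p k + 2 + 2*((j:ℤ)+1)) ht
        rw [show p k + 2 + 2*((j:ℤ)+1) - 2 = p k + 2 + 2*(j:ℤ) by ring] at this
        push_cast at this ⊢
        rw [this, ih]
        ring
  -- main induction: C k = r k
  have hmain : ∀ k : ℕ, k ≤ n → ((C k : ℤ)) = r k := by
    intro k
    induction k using Nat.strong_induction_on with
    | _ k ih =>
      intro hk
      match k with
      | 0 => rw [hC0, hr0]; norm_num
      | (m+1) =>
        have hsm : s (m+1) = p (m+1) - p m - 1 := by
          have := hs (m+1) (by omega) hk
          simpa using this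
        have hspos : 1 ≤ s (m+1) := by
          have := hgap m hk; omega
        have hCm : ((C m : ℤ)) = r m := ih m (by omega) (by omega)
        rcases Int.even_or_odd (s (m+1)) with he | ho
        · -- even gap
          obtain ⟨c, hc⟩ := he
          have hc1 : 1 ≤ c := by omega
          set j := c.toNat with hjdef
          have hjc : (j : ℤ) = c := Int.toNat_of_nonneg (by omega)
          have hpc : p (m+1) = p m + 1 + 2*(j:ℤ) := by omega
          have hval : C (m+1) = (j+1) * C m := by
            rw [hCH m, hpc]
            exact hcasc1 m (by omega) j
          have hdiv : s (m+1) / 2 = (j:ℤ) := by omega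
          have hreq : r (m+1) = ((j:ℤ)+1) * r m := by
            match m with
            | 0 =>
              rw [hr1even ⟨c, hc⟩, hdiv, hr0]; ring
            | (m'+1) =>
              have := hreven (m'+2) (by omega) hk ⟨c, hc⟩
              simpa [hdiv] using this
          rw [hreq, ← hCm, hval]
          push_cast
          ring
        · -- odd gap
          obtain ⟨c, hc⟩ := ho
          have hc0 : 0 ≤ c := by omega
          set j := c.toNat with hjdef
          have hjc : (j : ℤ) = c := Int.toNat_of_nonneg hc0
          have hpc : p (m+1) = p m + 2 + 2*(j:ℤ) := by omega
          have hval : C (m+1) = (j+1) * C m + Hc m (p m) := by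
            rw [hCH m, hpc]
            exact hcasc2 m (by omega) j
          have hdiv : (s (m+1) + 1) / 2 = (j:ℤ) + 1 := by omega
          match m with
          | 0 =>
            have hval0 : C 1 = (j+1) * C 0 := by
              rw [hval, hbnd0, hC0]; ring
            rw [hval0, hr1odd ⟨c, hc⟩, hdiv, hC0]
            push_cast
            ring
          | (m'+1) =>
            have hbkm := hbk m' (by omega)
            have hCm' : ((C m' : ℤ)) = r m' := ih m' (by omega) (by omega)
            have hrodd' := hrodd (m'+2) (by omega) hk ⟨c, hc⟩
            simp only [show m'+2-1 = m'+1 by omega, show m'+2-2 = m' by omega] at hrodd'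
            have hHcval : ((Hc (m'+1) (p (m'+1)) : ℤ)) = r (m'+1) - r m' := by
              have : ((C (m'+1) : ℤ)) = (C m' : ℤ) + (Hc (m'+1) (p (m'+1)) : ℤ) := by
                exact_mod_cast congrArg (Nat.cast : ℕ → ℤ) hbkm
              rw [hCm, hCm'] at this
              omega
            have : ((C (m'+2) : ℤ)) = ((j:ℤ)+1) * (C (m'+1)) + ((Hc (m'+1) (p (m'+1)) : ℤ)) := by
              rw [hval]; push_cast; ring
            rw [this, hHcval, hCm, hrodd', hdiv]
            ring
  -- identify Nu with the representation set
  have hNB : (N : ℝ) = B n := by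
    rw [hdsum, hsupp]
    rw [Finset.sum_image (fun i hi j hj hij => by
      by_contra hne
      rcases lt_trichotomy i j with h | h | h
      · exact absurd hij (ne_of_lt (hmono i j h (by
          have := Finset.mem_range.mp hj; omega)))
      · exact hne h
      · exact absurd hij.symm (ne_of_lt (hmono j i h (by
          have := Finset.mem_range.mp hi; omega))))]
    apply Finset.sum_congr rfl
    intro j hj
    have hj' : j ≤ n := by have := Finset.mem_range.mp hj; omega
    rw [hd1 _ (hpmem j hj')]
    norm_num
  have himg : Finsupp.support '' Nu = RepSet (B n) L (p n) := by
    rw [← lb_only (β := B n) (L := L) (u := p n) (hBhigh n le_rfl)]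
    ext S
    constructor
    · rintro ⟨a, ha, rfl⟩
      rw [hNu] at ha
      obtain ⟨⟨hale, hasum⟩, hlow⟩ := ha
      constructor
      · intro i hi
        by_contra hcon
        exact (Finsupp.mem_support_iff.mp hi) (hlow i (by omega))
      · rw [← hNB] at *
        rw [phiVal]
        rw [hasum]
        apply Finset.sum_congr rfl
        intro i hi
        have h1 := hale i
        have h2 := Finsupp.mem_support_iff.mp hi
        have : a i = 1 := by omega
        rw [this]
        norm_num
    · rintro ⟨hb, hv⟩
      set a := Finsupp.indicator S (fun _ _ => (1:ℕ)) with hadef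
      have happ : ∀ i, a i = if i ∈ S then 1 else 0 := by
        intro i
        rw [hadef, Finsupp.indicator_apply]
        split <;> simp_all
      have hsup : a.support = S := by
        ext i
        rw [Finsupp.mem_support_iff, happ]
        split <;> simp_all
      refine ⟨a, ?_, hsup⟩
      rw [hNu]
      refine ⟨⟨fun i => by rw [happ]; split <;> norm_num, ?_⟩, fun i hi => by
        rw [happ]
        split
        · exfalso; have := hb i (by assumption); omega
        · rfl⟩
      rw [hsup, hNB, ← hv, phiVal]
      apply Finset.sum_congr rfl
      intro i hi
      rw [happ]
      simp [hi]
  have hinj : Set.InjOn Finsupp.support Nu := by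
    intro a ha b hb hab
    rw [hNu] at ha hb
    ext i
    by_cases hi : i ∈ a.support
    · have hia := Finsupp.mem_support_iff.mp hi
      have hib := Finsupp.mem_support_iff.mp (hab ▸ hi)
      have h1 := ha.1.1 i
      have h2 := hb.1.1 i
      omega
    · have hia := Finsupp.notMem_support_iff.mp hi
      have hib := Finsupp.notMem_support_iff.mp (hab ▸ hi)
      rw [hia, hib]
  have hfin : Nu.Finite := by
    apply Set.Finite.of_finite_image _ hinj
    rw [himg]
    exact repSet_finite _ _ _
  have hcard : Nu.ncard = C n := by
    have := Set.ncard_image_of_injOn hinj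
    rw [himg] at this
    simp only [hC] at this ⊢
    omega
  exact ⟨hfin, by rw [hcard]; exact hmain n le_rfl⟩
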